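/- arXiv:1712.00066 — 2 statements merged into one kernel-verified Lean document; each statement's English description precedes it below -/
import Mathlib

section
/- Two orientation-preserving homeomorphisms φ₁, φ₂ of ℝ are conjugate in Homeo₊(ℝ) if there exists ψ ∈ Homeo₊(ℝ) with ψ(Fix(φ₁)) = Fix(φ₂) and ψ(Inc(φ₁)) = Inc(φ₂). -/
/-!
On an order-connected component `J` of `{x | x < φ₁ x}` the orbit of a point `p ∈ J` increases
and exhausts `J`: a bounded orbit would have a fixed point of `φ₁` as its supremum or infimum.
Hence `J` is tiled by the translates `φ₁ⁿ [p, φ₁ p)`. The image `ψ J` is a component of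
`{x | x < φ₂ x}`, tiled likewise by the translates of `[ψ p, φ₂ (ψ p))`. Mapping `[p, φ₁ p)`
affinely onto `[ψ p, φ₂ (ψ p))` by `G` and setting `χ (φ₁ⁿ z) = φ₂ⁿ (G z)` conjugates `φ₁` to `φ₂`
on `J`, and this is increasing because both tilings are ordered lexicographically by `(n, z)`.
The components on which `φ₁` moves points down are treated in the same way with `φ₁⁻¹, φ₂⁻¹`,
and on the fixed points `χ = ψ`. Distinct components are separated by fixed points, at which
`χ` agrees with the increasing map `ψ`, so `χ` is increasing on all of `ℝ`.
-/

open Set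
open scoped Interval

namespace Set

variable {α : Type*} [LinearOrder α] {s : Set α} {x y : α}

noncomputable def ordConnectedRep (s : Set α) (x : α) : α :=
  @Classical.epsilon α ⟨x⟩ (· ∈ s.ordConnectedComponent x)

lemma ordConnectedRep_mem (hx : x ∈ s) : ordConnectedRep s x ∈ s.ordConnectedComponent x :=
  @Classical.epsilon_spec α _ ⟨x, self_mem_ordConnectedComponent.2 hx⟩

lemma ordConnectedRep_eq (hy : y ∈ s.ordConnectedComponent x) :
    ordConnectedRep s y = ordConnectedRep s x := by
  rw [ordConnectedRep, ordConnectedRep, ordConnectedComponent_eq (mem_ordConnectedComponent.1 hy)]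

end Set

namespace OrderIso

section LinearOrder

variable {α β : Type*} [LinearOrder α] [LinearOrder β]

lemma mapsTo_ordConnectedComponent (e : α ≃o β) (s : Set α) (x : α) :
    MapsTo e (s.ordConnectedComponent x) ((e '' s).ordConnectedComponent (e x)) := by
  intro y hy
  rw [mem_ordConnectedComponent] at hy ⊢
  intro w hw
  have hw' : e.symm w ∈ [[x, y]] := by simpa using e.symm.monotone.mapsTo_uIcc hw
  exact ⟨e.symm w, hy hw', e.apply_symm_apply w⟩

variable (f : α ≃o α)

def incSet : Set α := {x | x < f x}

variable {f} {p x y z z' : α}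

lemma zpow_add_one_apply (n : ℤ) (x : α) : (f ^ (n + 1)) x = f ((f ^ n) x) := by
  rw [add_comm, zpow_one_add]; rfl

lemma apply_zpow_apply (n : ℤ) (x : α) : f ((f ^ n) x) = (f ^ n) (f x) := by
  rw [← zpow_add_one_apply, zpow_add_one]; rfl

lemma mem_incSet_inv_iff : x ∈ f⁻¹.incSet ↔ f x < x := f.lt_symm_apply

lemma incSet_inv : f⁻¹.incSet = ({x | f x = x} ∪ f.incSet)ᶜ := by
  ext x
  rw [mem_incSet_inv_iff, mem_compl_iff, mem_union, not_or]
  exact ⟨fun h => ⟨h.ne, h.not_gt⟩, fun ⟨hne, hnlt⟩ => (not_lt.1 hnlt).lt_of_ne hne⟩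

lemma disjoint_incSet_inv : Disjoint f.incSet f⁻¹.incSet := by
  rw [incSet_inv]
  exact disjoint_compl_right.mono_left subset_union_right

lemma apply_mem_incSet_iff : f x ∈ f.incSet ↔ x ∈ f.incSet := f.lt_iff_lt

lemma zpow_apply_mem_incSet (hx : x ∈ f.incSet) (n : ℤ) : (f ^ n) x ∈ f.incSet := by
  have h := (f ^ n).strictMono hx
  rwa [← apply_zpow_apply] at h

lemma uIcc_apply_subset_incSet (hx : x ∈ f.incSet) : [[x, f x]] ⊆ f.incSet := by
  rw [uIcc_of_le (le_of_lt hx)]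
  rintro t ⟨hxt, htf⟩
  rcases htf.lt_or_eq with htf | rfl
  · exact htf.trans_le (f.monotone hxt)
  · exact apply_mem_incSet_iff.2 hx

lemma ordConnectedComponent_apply (hx : x ∈ f.incSet) :
    f.incSet.ordConnectedComponent (f x) = f.incSet.ordConnectedComponent x :=
  (ordConnectedComponent_eq (uIcc_apply_subset_incSet hx)).symm

lemma ordConnectedComponent_zpow_apply (hx : x ∈ f.incSet) (n : ℤ) :
    f.incSet.ordConnectedComponent ((f ^ n) x) = f.incSet.ordConnectedComponent x := by
  induction n using Int.induction_on with
  | zero => rfl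
  | succ n ih =>
    rw [zpow_add_one_apply, ordConnectedComponent_apply (zpow_apply_mem_incSet hx n), ih]
  | pred n ih =>
    rw [← ordConnectedComponent_apply (zpow_apply_mem_incSet hx _), ← zpow_add_one_apply,
      sub_add_cancel, ih]

lemma zpow_apply_mem_ordConnectedComponent (hx : x ∈ f.incSet) (n : ℤ) :
    (f ^ n) x ∈ f.incSet.ordConnectedComponent x := by
  rw [← ordConnectedComponent_zpow_apply hx n]
  exact self_mem_ordConnectedComponent.2 (zpow_apply_mem_incSet hx n)

lemma Ico_subset_ordConnectedComponent (hp : p ∈ f.incSet) :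
    Ico p (f p) ⊆ f.incSet.ordConnectedComponent p := fun _ hz =>
  (uIcc_subset_uIcc_left (Icc_subset_uIcc (Ico_subset_Icc_self hz))).trans
    (uIcc_apply_subset_incSet hp)

lemma strictMono_zpow_apply (hp : p ∈ f.incSet) : StrictMono fun n : ℤ => (f ^ n) p :=
  strictMono_int_of_lt_succ fun n => by
    rw [zpow_add_one_apply]
    exact zpow_apply_mem_incSet hp n

lemma zpow_apply_mem_Ico (hz : z ∈ Ico p (f p)) (n : ℤ) :
    (f ^ n) z ∈ Ico ((f ^ n) p) ((f ^ (n + 1)) p) := by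
  rw [zpow_add_one]
  exact ⟨(f ^ n).monotone hz.1, (f ^ n).strictMono hz.2⟩

lemma zpow_apply_lt_zpow_apply_of_lt (hp : p ∈ f.incSet) (hz : z ∈ Ico p (f p))
    (hz' : z' ∈ Ico p (f p)) {m k : ℤ} (hmk : m < k) : (f ^ m) z < (f ^ k) z' :=
  calc (f ^ m) z < (f ^ (m + 1)) p := (zpow_apply_mem_Ico hz m).2
    _ ≤ (f ^ k) p := (strictMono_zpow_apply hp).monotone hmk
    _ ≤ (f ^ k) z' := (zpow_apply_mem_Ico hz' k).1

lemma zpow_apply_lt_zpow_apply_iff (hp : p ∈ f.incSet) (hz : z ∈ Ico p (f p))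
    (hz' : z' ∈ Ico p (f p)) {m k : ℤ} :
    (f ^ m) z < (f ^ k) z' ↔ m < k ∨ m = k ∧ z < z' := by
  constructor
  · intro h
    rcases lt_trichotomy m k with hmk | rfl | hkm
    · exact Or.inl hmk
    · exact Or.inr ⟨rfl, (f ^ m).lt_iff_lt.1 h⟩
    · exact absurd (zpow_apply_lt_zpow_apply_of_lt hp hz' hz hkm) h.not_gt
  · rintro (hmk | ⟨rfl, hzz'⟩)
    · exact zpow_apply_lt_zpow_apply_of_lt hp hz hz' hmk
    · exact (f ^ m).strictMono hzz'

lemma eq_of_zpow_apply_eq (hp : p ∈ f.incSet) (hz : z ∈ Ico p (f p))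
    (hz' : z' ∈ Ico p (f p)) {m k : ℤ} (h : (f ^ m) z = (f ^ k) z') : m = k := by
  by_contra hne
  rcases lt_or_gt_of_ne hne with hmk | hkm
  · exact (zpow_apply_lt_zpow_apply_of_lt hp hz hz' hmk).ne h
  · exact (zpow_apply_lt_zpow_apply_of_lt hp hz' hz hkm).ne' h

variable (f) in
noncomputable def orbitIndex (p x : α) : ℤ :=
  Classical.epsilon fun n : ℤ => (f ^ n)⁻¹ x ∈ Ico p (f p)

lemma orbitIndex_zpow_apply (hp : p ∈ f.incSet) (hz : z ∈ Ico p (f p)) (n : ℤ) :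
    orbitIndex f p ((f ^ n) z) = n := by
  have hex : ∃ m : ℤ, (f ^ m)⁻¹ ((f ^ n) z) ∈ Ico p (f p) :=
    ⟨n, by rwa [RelIso.inv_apply_self]⟩
  have hspec := Classical.epsilon_spec hex
  exact eq_of_zpow_apply_eq hp hspec hz (RelIso.apply_inv_self _ _)

end LinearOrder

section ConditionallyComplete

variable {α : Type*} [ConditionallyCompleteLinearOrder α] {f : α ≃o α} {p y : α}

lemma image_range_zpow_apply (f : α ≃o α) (p : α) :
    f '' range (fun n : ℤ => (f ^ n) p) = range fun n : ℤ => (f ^ n) p := by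
  have hshift :
      (f ∘ fun n : ℤ => (f ^ n) p) = (fun n : ℤ => (f ^ n) p) ∘ Equiv.addRight 1 :=
    funext fun n => (zpow_add_one_apply n p).symm
  rw [← range_comp, hshift, (Equiv.addRight 1).surjective.range_comp]

lemma exists_zpow_apply_le (hy : y ∈ f.incSet.ordConnectedComponent p) :
    ∃ n : ℤ, (f ^ n) p ≤ y := by
  by_contra! h
  have hbdd : BddBelow (range fun n : ℤ => (f ^ n) p) :=
    ⟨y, forall_mem_range.2 fun n => (h n).le⟩
  have hfix := f.map_csInf' (range_nonempty _) hbdd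
  rw [image_range_zpow_apply] at hfix
  have hmem : sInf (range fun n : ℤ => (f ^ n) p) ∈ [[p, y]] :=
    mem_uIcc_of_ge (le_csInf (range_nonempty _) (forall_mem_range.2 fun n => (h n).le))
      (csInf_le hbdd ⟨0, rfl⟩)
  exact (mem_ordConnectedComponent.1 hy hmem).ne' hfix

lemma exists_lt_zpow_apply (hy : y ∈ f.incSet.ordConnectedComponent p) :
    ∃ n : ℤ, y < (f ^ n) p := by
  by_contra! h
  have hbdd : BddAbove (range fun n : ℤ => (f ^ n) p) := ⟨y, forall_mem_range.2 h⟩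
  have hfix := f.map_csSup' (range_nonempty _) hbdd
  rw [image_range_zpow_apply] at hfix
  have hmem : sSup (range fun n : ℤ => (f ^ n) p) ∈ [[p, y]] :=
    mem_uIcc_of_le (le_csSup hbdd ⟨0, rfl⟩) (csSup_le (range_nonempty _) (forall_mem_range.2 h))
  exact (mem_ordConnectedComponent.1 hy hmem).ne' hfix

lemma exists_zpow_apply_eq (hp : p ∈ f.incSet) (hy : y ∈ f.incSet.ordConnectedComponent p) :
    ∃ n : ℤ, ∃ z ∈ Ico p (f p), (f ^ n) z = y := by
  obtain ⟨k, hk⟩ := exists_lt_zpow_apply hy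
  obtain ⟨n, hn, hmax⟩ := Int.exists_greatest_of_bdd (P := fun n : ℤ => (f ^ n) p ≤ y)
    ⟨k, fun m hm => ((strictMono_zpow_apply hp).lt_iff_lt.1 (hm.trans_lt hk)).le⟩
    (exists_zpow_apply_le hy)
  refine ⟨n, (f ^ n).symm y, ⟨(f ^ n).le_symm_apply.2 hn, (f ^ n).symm_apply_lt.2 ?_⟩,
    (f ^ n).apply_symm_apply y⟩
  by_contra! hle
  rw [← apply_zpow_apply, ← zpow_add_one_apply] at hle
  exact (lt_add_one n).not_ge (hmax (n + 1) hle)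

end ConditionallyComplete

lemma isOpen_incSet {α : Type*} [TopologicalSpace α] [LinearOrder α] [OrderTopology α]
    (f : α ≃o α) : IsOpen f.incSet :=
  isOpen_lt continuous_id f.continuous

section Real

noncomputable def fundDomainMap (ψ f g : ℝ ≃o ℝ) (p x : ℝ) : ℝ :=
  (g (ψ p) - ψ p) / (f p - p) * (x - p) + ψ p

noncomputable def conjOnComponent (ψ f g : ℝ ≃o ℝ) (p x : ℝ) : ℝ :=
  (g ^ orbitIndex f p x) (fundDomainMap ψ f g p ((f ^ orbitIndex f p x)⁻¹ x))

noncomputable def incConj (ψ f g : ℝ ≃o ℝ) (x : ℝ) : ℝ :=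
  conjOnComponent ψ f g (ordConnectedRep f.incSet x) x

variable {ψ f g : ℝ ≃o ℝ} {p x z : ℝ}

lemma fundDomainMap_strictMono (hp : p ∈ f.incSet) (hq : ψ p ∈ g.incSet) :
    StrictMono (fundDomainMap ψ f g p) := fun a b hab => by
  have hslope : 0 < (g (ψ p) - ψ p) / (f p - p) := div_pos (sub_pos.2 hq) (sub_pos.2 hp)
  unfold fundDomainMap
  gcongr

lemma image_fundDomainMap_Ico (hp : p ∈ f.incSet) (hq : ψ p ∈ g.incSet) :
    fundDomainMap ψ f g p '' Ico p (f p) = Ico (ψ p) (g (ψ p)) := by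
  have hfp : f p - p ≠ 0 := sub_ne_zero.2 (ne_of_gt hp)
  have hgq : g (ψ p) - ψ p ≠ 0 := sub_ne_zero.2 (ne_of_gt hq)
  have hsurj : Function.Surjective (fundDomainMap ψ f g p) := fun w =>
    ⟨(w - ψ p) * (f p - p) / (g (ψ p) - ψ p) + p, by unfold fundDomainMap; field_simp; ring⟩
  have himage :=
    (StrictMono.orderIsoOfSurjective _ (fundDomainMap_strictMono hp hq) hsurj).image_Ico p (f p)
  simp only [StrictMono.coe_orderIsoOfSurjective] at himage
  rw [himage]
  congr 1 <;> unfold fundDomainMap <;> field_simp <;> ring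

lemma incConj_zpow_apply (hx : x ∈ f.incSet)
    (hz : z ∈ Ico (ordConnectedRep f.incSet x) (f (ordConnectedRep f.incSet x))) (n : ℤ) :
    incConj ψ f g ((f ^ n) z) =
      (g ^ n) (fundDomainMap ψ f g (ordConnectedRep f.incSet x) z) := by
  set b := ordConnectedRep f.incSet x
  have hb : b ∈ f.incSet.ordConnectedComponent x := ordConnectedRep_mem hx
  have hzb := Ico_subset_ordConnectedComponent (ordConnectedComponent_subset hb) hz
  have hrep : ordConnectedRep f.incSet ((f ^ n) z) = b :=
    ordConnectedRep_eq (mem_ordConnectedComponent_trans (mem_ordConnectedComponent_trans hb hzb)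
      (zpow_apply_mem_ordConnectedComponent (ordConnectedComponent_subset hzb) n))
  rw [incConj, conjOnComponent, hrep, orbitIndex_zpow_apply (ordConnectedComponent_subset hb) hz,
    RelIso.inv_apply_self]

lemma exists_zpow_apply_eq_of_mem_incSet (hx : x ∈ f.incSet) :
    ∃ n : ℤ, ∃ z ∈ Ico (ordConnectedRep f.incSet x) (f (ordConnectedRep f.incSet x)),
      (f ^ n) z = x :=
  exists_zpow_apply_eq (ordConnectedComponent_subset (ordConnectedRep_mem hx))
    (mem_ordConnectedComponent_comm.1 (ordConnectedRep_mem hx))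

lemma incConj_apply (hx : x ∈ f.incSet) : incConj ψ f g (f x) = g (incConj ψ f g x) := by
  obtain ⟨n, z, hz, rfl⟩ := exists_zpow_apply_eq_of_mem_incSet hx
  rw [← zpow_add_one_apply, incConj_zpow_apply hx hz, incConj_zpow_apply hx hz,
    zpow_add_one_apply]

lemma incConj_strictMonoOn (hI : ψ '' f.incSet = g.incSet) :
    StrictMonoOn (incConj ψ f g) (f.incSet.ordConnectedComponent x) := by
  intro y hy y' hy' hyy'
  have hx : x ∈ f.incSet := nonempty_ordConnectedComponent.1 ⟨y, hy⟩
  set b := ordConnectedRep f.incSet x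
  have hb : b ∈ f.incSet := ordConnectedComponent_subset (ordConnectedRep_mem hx)
  have hq : ψ b ∈ g.incSet := hI ▸ mem_image_of_mem ψ hb
  have hmapsTo := (image_fundDomainMap_Ico (g := g) hb hq).subset
  have hxb : x ∈ f.incSet.ordConnectedComponent b :=
    mem_ordConnectedComponent_comm.1 (ordConnectedRep_mem hx)
  obtain ⟨m, z, hz, rfl⟩ := exists_zpow_apply_eq hb (mem_ordConnectedComponent_trans hxb hy)
  obtain ⟨k, z', hz', rfl⟩ := exists_zpow_apply_eq hb (mem_ordConnectedComponent_trans hxb hy')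
  rw [incConj_zpow_apply hx hz, incConj_zpow_apply hx hz',
    zpow_apply_lt_zpow_apply_iff hq (hmapsTo (mem_image_of_mem _ hz))
      (hmapsTo (mem_image_of_mem _ hz'))]
  exact ((zpow_apply_lt_zpow_apply_iff hb hz hz').1 hyy').imp_right
    (And.imp_right fun h => fundDomainMap_strictMono hb hq h)

lemma incConj_mem_ordConnectedComponent (hI : ψ '' f.incSet = g.incSet) (hx : x ∈ f.incSet) :
    incConj ψ f g x ∈ g.incSet.ordConnectedComponent (ψ x) := by
  set b := ordConnectedRep f.incSet x
  have hbx : b ∈ f.incSet.ordConnectedComponent x := ordConnectedRep_mem hx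
  have hb : b ∈ f.incSet := ordConnectedComponent_subset hbx
  have hq : ψ b ∈ g.incSet := hI ▸ mem_image_of_mem ψ hb
  have hqx : ψ b ∈ g.incSet.ordConnectedComponent (ψ x) :=
    hI ▸ ψ.mapsTo_ordConnectedComponent f.incSet x hbx
  obtain ⟨n, z, hz, rfl⟩ := exists_zpow_apply_eq_of_mem_incSet hx
  rw [incConj_zpow_apply hx hz]
  have hGz : fundDomainMap ψ f g b z ∈ g.incSet.ordConnectedComponent (ψ b) :=
    Ico_subset_ordConnectedComponent hq
      ((image_fundDomainMap_Ico hb hq).subset (mem_image_of_mem _ hz))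
  exact mem_ordConnectedComponent_trans (mem_ordConnectedComponent_trans hqx hGz)
    (zpow_apply_mem_ordConnectedComponent (ordConnectedComponent_subset hGz) n)

lemma incConj_surjOn (hI : ψ '' f.incSet = g.incSet) :
    SurjOn (incConj ψ f g) f.incSet g.incSet := by
  intro w hw
  obtain ⟨x, hx, rfl⟩ : w ∈ ψ '' f.incSet := hI ▸ hw
  set b := ordConnectedRep f.incSet x
  have hbx : b ∈ f.incSet.ordConnectedComponent x := ordConnectedRep_mem hx
  have hb : b ∈ f.incSet := ordConnectedComponent_subset hbx
  have hq : ψ b ∈ g.incSet := hI ▸ mem_image_of_mem ψ hb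
  have hxq : ψ x ∈ g.incSet.ordConnectedComponent (ψ b) :=
    hI ▸ ψ.mapsTo_ordConnectedComponent f.incSet b (mem_ordConnectedComponent_comm.1 hbx)
  obtain ⟨n, u, hu, hnu⟩ := exists_zpow_apply_eq hq hxq
  rw [← image_fundDomainMap_Ico (f := f) hb hq] at hu
  obtain ⟨z, hz, rfl⟩ := hu
  have hzI : z ∈ f.incSet := ordConnectedComponent_subset (Ico_subset_ordConnectedComponent hb hz)
  exact ⟨(f ^ n) z, zpow_apply_mem_incSet hzI n, by rw [incConj_zpow_apply hx hz, hnu]⟩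

lemma incConj_lt_of_Icc_subset (hI : ψ '' f.incSet = g.incSet) {x y : ℝ}
    (h : Icc x y ⊆ f.incSet) (hxy : x < y) : incConj ψ f g x < incConj ψ f g y :=
  incConj_strictMonoOn hI (self_mem_ordConnectedComponent.2 (h (left_mem_Icc.2 hxy.le)))
    (mem_ordConnectedComponent.2 (by rwa [uIcc_of_le hxy.le])) hxy

open Classical in
noncomputable def conjOfWeakConj (ψ φ₁ φ₂ : ℝ ≃o ℝ) (x : ℝ) : ℝ :=
  if x ∈ φ₁.incSet then incConj ψ φ₁ φ₂ x
  else if x ∈ φ₁⁻¹.incSet then incConj ψ φ₁⁻¹ φ₂⁻¹ x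
  else ψ x

variable {φ₁ φ₂ : ℝ ≃o ℝ}

lemma image_incSet_inv (hFix : ψ '' {x | φ₁ x = x} = {x | φ₂ x = x})
    (hInc : ψ '' φ₁.incSet = φ₂.incSet) : ψ '' φ₁⁻¹.incSet = φ₂⁻¹.incSet := by
  rw [incSet_inv, incSet_inv, image_compl_eq ψ.bijective, image_union, hFix, hInc]

lemma conjOfWeakConj_of_mem_incSet (hx : x ∈ φ₁.incSet) :
    conjOfWeakConj ψ φ₁ φ₂ x = incConj ψ φ₁ φ₂ x :=
  if_pos hx

lemma conjOfWeakConj_of_mem_incSet_inv (hx : x ∈ φ₁⁻¹.incSet) :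
    conjOfWeakConj ψ φ₁ φ₂ x = incConj ψ φ₁⁻¹ φ₂⁻¹ x := by
  rw [conjOfWeakConj, if_neg (disjoint_incSet_inv.notMem_of_mem_right hx), if_pos hx]

lemma conjOfWeakConj_of_fixed (hx : φ₁ x = x) : conjOfWeakConj ψ φ₁ φ₂ x = ψ x := by
  have hinc : x ∉ φ₁.incSet := fun h => h.ne' hx
  have hdec : x ∉ φ₁⁻¹.incSet := fun h => (mem_incSet_inv_iff.1 h).ne hx
  rw [conjOfWeakConj, if_neg hinc, if_neg hdec]

lemma apply_fixed_of_image_eq (hFix : ψ '' {x | φ₁ x = x} = {x | φ₂ x = x})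
    (hx : φ₁ x = x) : φ₂ (ψ x) = ψ x :=
  hFix.subset (mem_image_of_mem ψ hx)

lemma conjOfWeakConj_apply (hFix : ψ '' {x | φ₁ x = x} = {x | φ₂ x = x}) (x : ℝ) :
    conjOfWeakConj ψ φ₁ φ₂ (φ₁ x) = φ₂ (conjOfWeakConj ψ φ₁ φ₂ x) := by
  rcases lt_trichotomy (φ₁ x) x with hdec | hfix | hinc
  · have hx : x ∈ φ₁⁻¹.incSet := mem_incSet_inv_iff.2 hdec
    have hx' : φ₁ x ∈ φ₁⁻¹.incSet := mem_incSet_inv_iff.2 (φ₁.strictMono hdec)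
    have hinv := incConj_apply (ψ := ψ) (g := φ₂⁻¹) hx'
    rw [RelIso.inv_apply_self] at hinv
    rw [conjOfWeakConj_of_mem_incSet_inv hx', conjOfWeakConj_of_mem_incSet_inv hx, hinv,
      RelIso.apply_inv_self]
  · rw [hfix, conjOfWeakConj_of_fixed hfix, apply_fixed_of_image_eq hFix hfix]
  · rw [conjOfWeakConj_of_mem_incSet (apply_mem_incSet_iff.2 hinc),
      conjOfWeakConj_of_mem_incSet hinc, incConj_apply hinc]

lemma uIcc_conjOfWeakConj_subset (hFix : ψ '' {x | φ₁ x = x} = {x | φ₂ x = x})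
    (hInc : ψ '' φ₁.incSet = φ₂.incSet) (hx : φ₁ x ≠ x) :
    [[ψ x, conjOfWeakConj ψ φ₁ φ₂ x]] ⊆ {w | φ₂ w ≠ w} := by
  rcases hx.lt_or_gt with hdec | hinc
  · have hx : x ∈ φ₁⁻¹.incSet := mem_incSet_inv_iff.2 hdec
    rw [conjOfWeakConj_of_mem_incSet_inv hx]
    exact fun w hw => (mem_incSet_inv_iff.1 (mem_ordConnectedComponent.1
      (incConj_mem_ordConnectedComponent (image_incSet_inv hFix hInc) hx) hw)).ne
  · rw [conjOfWeakConj_of_mem_incSet hinc]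
    exact fun w hw => (mem_ordConnectedComponent.1
      (incConj_mem_ordConnectedComponent hInc hinc) hw).ne'

lemma conjOfWeakConj_lt_of_lt_fixed (hFix : ψ '' {x | φ₁ x = x} = {x | φ₂ x = x})
    (hInc : ψ '' φ₁.incSet = φ₂.incSet) (hz : φ₁ z = z) (hxz : x < z) :
    conjOfWeakConj ψ φ₁ φ₂ x < ψ z := by
  by_cases hx : φ₁ x = x
  · rw [conjOfWeakConj_of_fixed hx]
    exact ψ.strictMono hxz
  by_contra! h
  exact uIcc_conjOfWeakConj_subset hFix hInc hx (mem_uIcc_of_le (ψ.monotone hxz.le) h)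
    (apply_fixed_of_image_eq hFix hz)

lemma lt_conjOfWeakConj_of_fixed_lt (hFix : ψ '' {x | φ₁ x = x} = {x | φ₂ x = x})
    (hInc : ψ '' φ₁.incSet = φ₂.incSet) (hz : φ₁ z = z) (hzx : z < x) :
    ψ z < conjOfWeakConj ψ φ₁ φ₂ x := by
  by_cases hx : φ₁ x = x
  · rw [conjOfWeakConj_of_fixed hx]
    exact ψ.strictMono hzx
  by_contra! h
  exact uIcc_conjOfWeakConj_subset hFix hInc hx (mem_uIcc_of_ge h (ψ.monotone hzx.le))
    (apply_fixed_of_image_eq hFix hz)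

lemma conjOfWeakConj_strictMono (hFix : ψ '' {x | φ₁ x = x} = {x | φ₂ x = x})
    (hInc : ψ '' φ₁.incSet = φ₂.incSet) : StrictMono (conjOfWeakConj ψ φ₁ φ₂) := by
  intro x y hxy
  by_cases hfix : ∃ z ∈ Icc x y, φ₁ z = z
  · obtain ⟨z, ⟨hxz, hzy⟩, hz⟩ := hfix
    rcases hxz.eq_or_lt with rfl | hxz
    · rw [conjOfWeakConj_of_fixed hz]
      exact lt_conjOfWeakConj_of_fixed_lt hFix hInc hz hxy
    rcases hzy.eq_or_lt with rfl | hzy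
    · rw [conjOfWeakConj_of_fixed hz]
      exact conjOfWeakConj_lt_of_lt_fixed hFix hInc hz hxy
    exact (conjOfWeakConj_lt_of_lt_fixed hFix hInc hz hxz).trans
      (lt_conjOfWeakConj_of_fixed_lt hFix hInc hz hzy)
  push Not at hfix
  have hcover : Icc x y ⊆ φ₁.incSet ∪ φ₁⁻¹.incSet := fun z hz =>
    (hfix z hz).lt_or_gt.elim (fun h => Or.inr (mem_incSet_inv_iff.2 h)) Or.inl
  rcases isPreconnected_Icc.subset_or_subset (isOpen_incSet φ₁) (isOpen_incSet φ₁⁻¹)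
    disjoint_incSet_inv hcover with h | h
  · rw [conjOfWeakConj_of_mem_incSet (h (left_mem_Icc.2 hxy.le)),
      conjOfWeakConj_of_mem_incSet (h (right_mem_Icc.2 hxy.le))]
    exact incConj_lt_of_Icc_subset hInc h hxy
  · rw [conjOfWeakConj_of_mem_incSet_inv (h (left_mem_Icc.2 hxy.le)),
      conjOfWeakConj_of_mem_incSet_inv (h (right_mem_Icc.2 hxy.le))]
    exact incConj_lt_of_Icc_subset (image_incSet_inv hFix hInc) h hxy

lemma conjOfWeakConj_surjective (hFix : ψ '' {x | φ₁ x = x} = {x | φ₂ x = x})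
    (hInc : ψ '' φ₁.incSet = φ₂.incSet) :
    Function.Surjective (conjOfWeakConj ψ φ₁ φ₂) := by
  intro w
  rcases lt_trichotomy (φ₂ w) w with hdec | hfix | hinc
  · obtain ⟨x, hx, rfl⟩ :=
      incConj_surjOn (image_incSet_inv hFix hInc) (mem_incSet_inv_iff.2 hdec)
    exact ⟨x, conjOfWeakConj_of_mem_incSet_inv hx⟩
  · obtain ⟨x, hx, rfl⟩ : w ∈ ψ '' {x | φ₁ x = x} := hFix ▸ hfix
    exact ⟨x, conjOfWeakConj_of_fixed hx⟩
  · obtain ⟨x, hx, rfl⟩ := incConj_surjOn hInc hinc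
    exact ⟨x, conjOfWeakConj_of_mem_incSet hx⟩

end Real

end OrderIso

/-- If there is a weak conjugation ψ from φ₁ to φ₂, i.e. ψ(Fix(φ₁)) = Fix(φ₂)
and ψ(Inc(φ₁)) = Inc(φ₂), then φ₁ and φ₂ are conjugate in Homeo₊(ℝ). -/
theorem weak_conj_implies_conj (ψ φ₁ φ₂ : ℝ ≃o ℝ)
    (hFix : ψ '' {x | φ₁ x = x} = {x | φ₂ x = x})
    (hInc : ψ '' {x | φ₁ x > x} = {x | φ₂ x > x}) :
    ∃ χ : ℝ ≃o ℝ, ∀ x : ℝ, χ (φ₁ x) = φ₂ (χ x) :=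
  ⟨StrictMono.orderIsoOfSurjective _ (OrderIso.conjOfWeakConj_strictMono hFix hInc)
      (OrderIso.conjOfWeakConj_surjective hFix hInc),
    OrderIso.conjOfWeakConj_apply hFix⟩
end

section
/- A countable group G is left orderable if and only if G admits a faithful action by orientation-preserving homeomorphisms of the real line, i.e., an injective homomorphism G → Homeo₊(ℝ). -/
/-!
A left order on `G` makes `G ×ₗ ℚ` a countable dense linear order without endpoints, on which
`G` acts faithfully by order automorphisms via left multiplication on the first coordinate. By
Cantor's back-and-forth theorem this order is isomorphic to `ℚ`, and every order automorphism of
`ℚ` extends to one of `ℝ` by taking suprema, compatibly with composition.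

Conversely, if `G` acts faithfully on `ℝ`, fix a dense sequence `(xₙ)` and compare `g` and `h` by
the lexicographic order of `(g xₙ)ₙ` and `(h xₙ)ₙ`. Order automorphisms of `ℝ` are continuous, so
by density and faithfulness this is a linear order on `G`; it is left-invariant because each
`c ∈ G` acts by a strictly increasing map.
-/

open Function

theorem OrderIso.ext_of_denseRange {ι X : Type*} [LinearOrder X] [TopologicalSpace X]
    [OrderTopology X] {x : ι → X} (hx : DenseRange x) {f g : X ≃o X}
    (h : ∀ i, f (x i) = g (x i)) : f = g :=
  DFunLike.coe_injective <| Continuous.ext_on hx f.continuous g.continuous <| by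
    rintro _ ⟨i, rfl⟩
    exact h i

namespace OrderIso

def autCongr {α β : Type*} [Preorder α] [Preorder β] (e : α ≃o β) : (α ≃o α) ≃* (β ≃o β) where
  toFun f := (e.symm.trans f).trans e
  invFun g := (e.trans g).trans e.symm
  left_inv f := by ext; simp
  right_inv g := by ext; simp
  map_mul' f g := by ext; simp [RelIso.mul_apply]

section ExtendReal

variable (f : ℚ ≃o ℚ)

noncomputable def extendRealFun (x : ℝ) : ℝ :=
  sSup ((fun q : ℚ ↦ (f q : ℝ)) '' {q : ℚ | (q : ℝ) ≤ x})

variable {f}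

theorem mem_upperBounds_extendRealFun {x : ℝ} {q : ℚ} (hq : x ≤ q) :
    (f q : ℝ) ∈ upperBounds ((fun q : ℚ ↦ (f q : ℝ)) '' {q : ℚ | (q : ℝ) ≤ x}) := by
  rintro _ ⟨p, hp, rfl⟩
  exact Rat.cast_le.mpr (f.monotone (Rat.cast_le.mp (hp.trans hq)))

theorem le_extendRealFun {x : ℝ} {q : ℚ} (hq : (q : ℝ) ≤ x) :
    (f q : ℝ) ≤ extendRealFun f x := by
  obtain ⟨p, hp⟩ := exists_rat_gt x
  exact le_csSup ⟨_, mem_upperBounds_extendRealFun hp.le⟩ ⟨q, hq, rfl⟩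

theorem extendRealFun_le {x : ℝ} {q : ℚ} (hq : x ≤ q) : extendRealFun f x ≤ f q := by
  obtain ⟨p, hp⟩ := exists_rat_lt x
  exact csSup_le ⟨_, p, hp.le, rfl⟩ (mem_upperBounds_extendRealFun hq)

theorem extendRealFun_ratCast (q : ℚ) : extendRealFun f q = f q :=
  (extendRealFun_le le_rfl).antisymm (le_extendRealFun le_rfl)

theorem extendRealFun_monotone : Monotone (extendRealFun f) := fun x y hxy ↦ by
  obtain ⟨p, hp⟩ := exists_rat_lt x
  exact csSup_le ⟨_, p, hp.le, rfl⟩ fun _ ⟨q, hq, h⟩ ↦ h ▸ le_extendRealFun (hq.trans hxy)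

theorem extendRealFun_extendRealFun_symm (y : ℝ) :
    extendRealFun f (extendRealFun f.symm y) = y := by
  apply le_antisymm
  · refine le_of_forall_lt_rat_imp_le fun q hq ↦ ?_
    have : extendRealFun f.symm y ≤ f.symm q := extendRealFun_le hq.le
    simpa using extendRealFun_le (f := f) this
  · refine le_of_forall_rat_lt_imp_le fun q hq ↦ ?_
    have : (f.symm q : ℝ) ≤ extendRealFun f.symm y := le_extendRealFun hq.le
    simpa using le_extendRealFun (f := f) this

variable (f) in
noncomputable def extendReal : ℝ ≃o ℝ :=
  ofHomInv ⟨extendRealFun f, extendRealFun_monotone⟩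
    ⟨extendRealFun f.symm, extendRealFun_monotone⟩
    (OrderHom.ext _ _ <| funext extendRealFun_extendRealFun_symm)
    (OrderHom.ext _ _ <| funext fun x ↦ by
      simpa using extendRealFun_extendRealFun_symm (f := f.symm) x)

@[simp]
theorem extendReal_ratCast (q : ℚ) : extendReal f q = f q := extendRealFun_ratCast q

noncomputable def extendRealHom : (ℚ ≃o ℚ) →* (ℝ ≃o ℝ) :=
  MonoidHom.mk' extendReal fun f g ↦ ext_of_denseRange Rat.denseRange_cast fun q ↦ by
    simp [RelIso.mul_apply]

theorem extendRealHom_injective : Injective extendRealHom := fun f g h ↦ by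
  ext q
  simpa [extendRealHom] using DFunLike.congr_fun h (q : ℝ)

end ExtendReal

end OrderIso

section LexAction

variable (G β : Type*) [Group G] [Preorder G] [MulLeftMono G] [Preorder β]

def prodLexMulLeft : G →* (G ×ₗ β ≃o G ×ₗ β) where
  toFun g := Prod.Lex.prodLexCongr (OrderIso.mulLeft g) (OrderIso.refl β)
  map_one' := by ext; simp [Prod.map]
  map_mul' g h := by ext; simp [RelIso.mul_apply, Prod.map, mul_assoc]

theorem prodLexMulLeft_injective [Nonempty β] : Injective (prodLexMulLeft G β) := by
  refine (injective_iff_map_eq_one _).mpr fun g hg ↦ ?_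
  obtain ⟨b⟩ := ‹Nonempty β›
  simpa [prodLexMulLeft] using
    congrArg (fun x ↦ (ofLex x).1) (DFunLike.congr_fun hg (toLex (1, b)))

end LexAction

theorem exists_injective_hom_orderIso_rat (G : Type*) [Group G] [LinearOrder G] [MulLeftMono G]
    [Countable G] : ∃ ρ : G →* (ℚ ≃o ℚ), Injective ρ := by
  have : Countable (G ×ₗ ℚ) := inferInstanceAs (Countable (G × ℚ))
  obtain ⟨e⟩ := Order.iso_of_countable_dense (G ×ₗ ℚ) ℚ
  exact ⟨(e.autCongr : _ →* _).comp (prodLexMulLeft G ℚ),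
    e.autCongr.injective.comp (prodLexMulLeft_injective G ℚ)⟩

theorem Pi.toLex_comp_lt_toLex_comp {ι α β : Type*} [LT ι] [Preorder α] [Preorder β]
    {f : α → β} (hf : StrictMono f) {v w : ι → α} (h : toLex v < toLex w) : toLex (f ∘ v) < toLex (f ∘ w) :=
  let ⟨i, hlt, hi⟩ := h
  ⟨i, fun j hj ↦ congrArg f (hlt j hj), hf hi⟩

section OrbitLex

variable {G X ι : Type*} [Group G] [LinearOrder X] (ρ : G →* (X ≃o X)) (x : ι → X)

def orbitLex (g : G) : Lex (ι → X) := toLex fun i ↦ ρ g (x i)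

theorem orbitLex_mul_lt_mul [LT ι] {a b : G} (c : G) (h : orbitLex ρ x a < orbitLex ρ x b) :
    orbitLex ρ x (c * a) < orbitLex ρ x (c * b) := by
  simp only [orbitLex, map_mul, RelIso.mul_apply]
  exact Pi.toLex_comp_lt_toLex_comp (ρ c).strictMono h

theorem orbitLex_injective [TopologicalSpace X] [OrderTopology X] (hρ : Injective ρ)
    (hx : DenseRange x) : Injective (orbitLex ρ x) := fun _ _ h ↦
  hρ <| OrderIso.ext_of_denseRange hx fun i ↦ congrFun (toLex.injective h) i

theorem exists_linearOrder_mulLeftStrictMono_of_injective [TopologicalSpace X] [OrderTopology X]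
    [TopologicalSpace.SeparableSpace X] [Nonempty X] (hρ : Injective ρ) :
    ∃ _ : LinearOrder G, MulLeftStrictMono G := by
  obtain ⟨x, hx⟩ := TopologicalSpace.exists_dense_seq X
  let := LinearOrder.lift' _ (orbitLex_injective ρ x hρ hx)
  exact ⟨this, ⟨fun c _ _ ↦ orbitLex_mul_lt_mul ρ x c⟩⟩

end OrbitLex

/-- A countable group is left orderable iff it admits a faithful action by
orientation-preserving homeomorphisms of the line. -/
theorem leftOrderable_iff_faithful_action (G : Type*) [Group G] [Countable G] :
    (∃ lo : LinearOrder G, ∀ a b c : G, lo.lt a b → lo.lt (c * a) (c * b)) ↔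
    (∃ ρ : G →* (ℝ ≃o ℝ), Function.Injective ρ) := by
  constructor
  · rintro ⟨lo, hlo⟩
    have : MulLeftStrictMono G := ⟨fun c a b ↦ hlo a b c⟩
    have := mulLeftMono_of_mulLeftStrictMono G
    obtain ⟨ρ, hρ⟩ := exists_injective_hom_orderIso_rat G
    exact ⟨OrderIso.extendRealHom.comp ρ, OrderIso.extendRealHom_injective.comp hρ⟩
  · rintro ⟨ρ, hρ⟩
    obtain ⟨lo, hlo⟩ := exists_linearOrder_mulLeftStrictMono_of_injective ρ hρ
    exact ⟨lo, fun a b c ↦ hlo.elim c⟩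
end
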